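/- Let μ be the Haar probability measure on X_L. For every z ∈ ℤ² with z ≠ 0, the integral ∫_{X_L} w(0)·w(z) dμ(w) = 0, while for z = 0 the integral equals 1. -/
import Mathlib


open MeasureTheory

def LedrappierSet : Set ((ℤ × ℤ) → ℤˣ) :=
  {w | ∀ x : ℤ × ℤ, w x * w (x + (1, 0)) * w (x + (0, 1)) = 1}

/- ### Auxiliary material -/

instance : DiscreteMeasurableSpace ℤˣ := by
  constructor
  intro s
  refine MeasurableSpace.measurableSet_comap.mpr ⟨Units.val '' s, MeasurableSet.of_discrete, ?_⟩
  ext u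
  simp only [Set.mem_preimage, Set.mem_image]
  exact ⟨fun ⟨x, hx, h⟩ => Units.ext h ▸ hx, fun h => ⟨u, h, rfl⟩⟩

/-- Generalized binomial coefficient mod 2: `LB y k` is `C(y,k) mod 2` for `y ≥ 0`,
extended to negative `y` via `C(y,k) ≡ C(k-y-1,k) mod 2`, and `0` for `k < 0`. -/
def LB (y k : ℤ) : ZMod 2 :=
  if k < 0 then 0
  else if 0 ≤ y then (Nat.choose y.toNat k.toNat : ZMod 2)
  else (Nat.choose (k - y - 1).toNat k.toNat : ZMod 2)

lemma LB_zero_right (y : ℤ) : LB y 0 = 1 := by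
  unfold LB
  rcases le_or_gt 0 y with h | h
  · rw [if_neg (by omega), if_pos h]; simp
  · rw [if_neg (by omega), if_neg (by omega)]
    simp

lemma LB_zero_left {k : ℤ} (hk : k ≠ 0) : LB 0 k = 0 := by
  unfold LB
  rcases lt_or_ge k 0 with h | h
  · rw [if_pos h]
  · rw [if_neg (by omega), if_pos le_rfl,
      Nat.choose_eq_zero_of_lt (by omega : (0:ℤ).toNat < k.toNat)]
    simp

lemma zmod2_add_self : ∀ s : ZMod 2, s + s = 0 := by decide

/-- Pascal's rule for the generalized binomial coefficient mod 2. -/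
lemma LB_pascal (y k : ℤ) : LB (y + 1) k = LB y k + LB y (k - 1) := by
  rcases lt_trichotomy k 0 with hk | hk | hk
  · unfold LB
    rw [if_pos hk, if_pos hk, if_pos (by omega : k - 1 < 0), add_zero]
  · subst hk
    rw [LB_zero_right, LB_zero_right]
    unfold LB
    rw [if_pos (by norm_num : (0:ℤ) - 1 < 0), add_zero]
  · have hk1 : ¬ k < 0 := by omega
    have hk1' : ¬ k - 1 < 0 := by omega
    rcases le_or_gt 0 y with hy | hy
    · unfold LB
      rw [if_neg hk1, if_neg hk1, if_neg hk1', if_pos hy, if_pos hy,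
        if_pos (by omega : (0:ℤ) ≤ y + 1)]
      rw [(by omega : (y + 1).toNat = y.toNat + 1), (by omega : k.toNat = (k - 1).toNat + 1),
        Nat.choose_succ_succ]
      push_cast
      ring
    · rcases eq_or_lt_of_le (by omega : y ≤ -1) with hy1 | hy1
      · have hy1 : y = -1 := hy1
        subst hy1
        unfold LB
        rw [if_neg hk1, if_neg hk1, if_neg hk1', if_pos (by norm_num : (0:ℤ) ≤ -1 + 1),
          if_neg (by norm_num : ¬ (0:ℤ) ≤ -1), if_neg (by norm_num : ¬ (0:ℤ) ≤ -1)]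
        rw [(by omega : (k - -1 - 1).toNat = k.toNat),
          (by omega : (k - 1 - -1 - 1).toNat = (k - 1).toNat),
          Nat.choose_self, Nat.choose_self,
          Nat.choose_eq_zero_of_lt (by omega : (-1 + 1 : ℤ).toNat < k.toNat)]
        push_cast
        rw [zmod2_add_self _]
      · unfold LB
        rw [if_neg hk1, if_neg hk1, if_neg hk1', if_neg (by omega : ¬ (0:ℤ) ≤ y),
          if_neg (by omega : ¬ (0:ℤ) ≤ y), if_neg (by omega : ¬ (0:ℤ) ≤ y + 1)]
        rw [(by omega : (k - (y + 1) - 1).toNat = (k - y - 2).toNat),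
          (by omega : (k - y - 1).toNat = (k - y - 2).toNat + 1),
          (by omega : k.toNat = (k - 1).toNat + 1),
          (by omega : (k - 1 - y - 1).toNat = (k - y - 2).toNat),
          Nat.choose_succ_succ]
        push_cast
        generalize ((k - y - 2).toNat.choose ((k - 1).toNat) : ZMod 2) = s
        generalize ((k - y - 2).toNat.choose ((k - 1).toNat + 1) : ZMod 2) = t
        rw [add_comm s t, add_assoc, zmod2_add_self _, add_zero]

/-- Sign character `ZMod 2 → ℤˣ`. -/
def lchi (s : ZMod 2) : ℤˣ := if s = 1 then -1 else 1

lemma lchi_add : ∀ s t : ZMod 2, lchi (s + t) = lchi s * lchi t := by decide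

/-- From a `ZMod 2`-valued solution of the Ledrappier relation distinguishing `0` and `z`,
produce a point of the Ledrappier set with `v(0) v(z) = -1`. -/
lemma exists_flip_of_eps (z : ℤ × ℤ) (ε : ℤ × ℤ → ZMod 2)
    (hrel : ∀ p : ℤ × ℤ, ε p + ε (p + (1, 0)) + ε (p + (0, 1)) = 0)
    (h0 : ε (0, 0) = 0) (hz : ε z = 1) :
    ∃ v ∈ LedrappierSet, ((v (0, 0) : ℤ) : ℤ) * ((v z : ℤ) : ℤ) = -1 := by
  refine ⟨fun p => lchi (ε p), ?_, ?_⟩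
  · intro p
    rw [← lchi_add, ← lchi_add, hrel p]
    rfl
  · show ((lchi (ε (0, 0)) : ℤˣ) : ℤ) * ((lchi (ε z) : ℤˣ) : ℤ) = -1
    rw [h0, hz]
    rfl

lemma eps_rel_A (a x y : ℤ) : LB y (a - x) + LB y (a - (x + 1)) + LB (y + 1) (a - x) = 0 := by
  rw [LB_pascal, (by ring : a - (x + 1) = a - x - 1)]
  generalize LB y (a - x) = s
  generalize LB y (a - x - 1) = t
  rw [(by ring : s + t + (s + t) = (s + s) + (t + t)), zmod2_add_self _, zmod2_add_self _, add_zero]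

lemma eps_rel_B (b x y : ℤ) : LB x (b - y) + LB (x + 1) (b - y) + LB x (b - (y + 1)) = 0 := by
  rw [LB_pascal, (by ring : b - (y + 1) = b - y - 1)]
  generalize LB x (b - y) = s
  generalize LB x (b - y - 1) = t
  rw [(by ring : s + (s + t) + t = (s + s) + (t + t)), zmod2_add_self _, zmod2_add_self _, add_zero]

/-- For every nonzero `z` there is a point of the Ledrappier set with `v(0) v(z) = -1`. -/
lemma exists_flip (z : ℤ × ℤ) (hz : z ≠ 0) :
    ∃ v ∈ LedrappierSet, ((v (0, 0) : ℤ) : ℤ) * ((v z : ℤ) : ℤ) = -1 := by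
  rcases eq_or_ne z.1 0 with ha | ha
  · -- z.2 ≠ 0; use ε(x,y) = LB x (z.2 - y)
    have hb : z.2 ≠ 0 := by
      intro hb; exact hz (Prod.ext ha hb)
    refine exists_flip_of_eps z (fun p => LB p.1 (z.2 - p.2)) ?_ ?_ ?_
    · rintro ⟨x, y⟩
      simpa only [Prod.mk_add_mk, add_zero] using eps_rel_B z.2 x y
    · show LB 0 (z.2 - 0) = 0
      rw [sub_zero]
      exact LB_zero_left hb
    · show LB z.1 (z.2 - z.2) = 1
      rw [sub_self]
      exact LB_zero_right _
  · -- z.1 ≠ 0; use ε(x,y) = LB y (z.1 - x)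
    refine exists_flip_of_eps z (fun p => LB p.2 (z.1 - p.1)) ?_ ?_ ?_
    · rintro ⟨x, y⟩
      simpa only [Prod.mk_add_mk, add_zero] using eps_rel_A z.1 x y
    · show LB 0 (z.1 - 0) = 0
      rw [sub_zero]
      exact LB_zero_left ha
    · show LB z.2 (z.1 - z.1) = 1
      rw [sub_self]
      exact LB_zero_right _

lemma units_cast_measurable : Measurable (fun u : ℤˣ => ((u : ℤ) : ℝ)) :=
  Measurable.of_discrete

/-- Against the Haar probability measure of `X_L`, the integral of
`w(0)·w(z)` (values `±1` regarded as real numbers) vanishes for `z ≠ 0`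
and equals `1` for `z = 0`. -/
theorem ledrappier_two_point_integral (μ : Measure ((ℤ × ℤ) → ℤˣ))
    [IsProbabilityMeasure μ] (hsupp : μ LedrappierSet = 1)
    (hinv : ∀ v ∈ LedrappierSet, Measure.map (fun w => v * w) μ = μ) :
    (∀ z : ℤ × ℤ, z ≠ 0 →
      ∫ w, (((w (0, 0) : ℤ) : ℝ) * ((w z : ℤ) : ℝ)) ∂μ = 0) ∧
    ∫ w, (((w (0, 0) : ℤ) : ℝ) * ((w (0, 0) : ℤ) : ℝ)) ∂μ = 1 := by
  constructor
  · intro z hz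
    obtain ⟨v, hv, hval⟩ := exists_flip z hz
    set f : ((ℤ × ℤ) → ℤˣ) → ℝ := fun w => ((w (0, 0) : ℤ) : ℝ) * ((w z : ℤ) : ℝ) with hf_def
    have hf : Measurable f :=
      (units_cast_measurable.comp (measurable_pi_apply (0, 0))).mul
        (units_cast_measurable.comp (measurable_pi_apply z))
    have hg : Measurable (fun w : (ℤ × ℤ) → ℤˣ => v * w) :=
      measurable_pi_lambda _ fun p =>
        (Measurable.of_discrete (f := fun u => v p * u)).comp (measurable_pi_apply p)
    have hmap := hinv v hv
    have h1 : ∫ w, f w ∂μ = ∫ w, f (v * w) ∂μ := by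
      conv_lhs => rw [← hmap]
      exact integral_map hg.aemeasurable hf.aestronglyMeasurable
    have hvalR : ((v (0, 0) : ℤ) : ℝ) * ((v z : ℤ) : ℝ) = -1 := by
      rw [← Int.cast_mul, hval]
      norm_num
    have h2 : ∀ w, f (v * w) = -f w := by
      intro w
      show (((v * w) (0, 0) : ℤ) : ℝ) * (((v * w) z : ℤ) : ℝ) = -f w
      simp only [Pi.mul_apply, Units.val_mul, Int.cast_mul]
      calc ((v (0, 0) : ℤ) : ℝ) * ((w (0, 0) : ℤ) : ℝ) * (((v z : ℤ) : ℝ) * ((w z : ℤ) : ℝ))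
          = (((v (0, 0) : ℤ) : ℝ) * ((v z : ℤ) : ℝ)) * f w := by rw [hf_def]; ring
        _ = -f w := by rw [hvalR]; ring
    have h3 : ∫ w, f (v * w) ∂μ = -∫ w, f w ∂μ := by
      simp_rw [h2]
      exact integral_neg f
    have : ∫ w, f w ∂μ = -∫ w, f w ∂μ := h1.trans h3
    linarith
  · have h1 : ∀ w : (ℤ × ℤ) → ℤˣ,
        ((w (0, 0) : ℤ) : ℝ) * ((w (0, 0) : ℤ) : ℝ) = 1 := by
      intro w
      rcases Int.units_eq_one_or (w (0, 0)) with h | h <;> rw [h] <;> norm_num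
    simp_rw [h1]
    simp
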